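/- Let (a_n)_{n≥0} be a sequence of nonnegative real numbers whose Hankel matrix [a_{i+j}]_{i,j≥0} is TP₄. Then (a_n) is 3-log-convex: the sequence L²(a) obtained by applying the operator L(a)_k = a_{k-1}a_{k+1} - a_k² twice is itself log-convex. -/

import Mathlib

/-- An infinite matrix `M : ℕ → ℕ → ℝ` is `TP_r` if all its minors of order `≤ r`
are nonnegative. -/
def IsTPr (r : ℕ) (M : ℕ → ℕ → ℝ) : Prop :=
  ∀ (m : ℕ), m ≤ r → ∀ (ri ci : Fin m → ℕ), StrictMono ri → StrictMono ci →
    0 ≤ Matrix.det (Matrix.of fun i j => M (ri i) (ci j))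

/-- The log-convexity operator, reindexed: `L(a)ₙ = aₙ a_{n+2} - a_{n+1}²`
(this is `a_{k-1}a_{k+1} - a_k²` at `k = n+1`). -/
def Lop (a : ℕ → ℝ) : ℕ → ℝ := fun n => a n * a (n + 2) - a (n + 1) ^ 2

/-- Explicit expansion of a 4×4 determinant. -/
lemma det_fin_four' (M : Matrix (Fin 4) (Fin 4) ℝ) :
    M.det =
      M 0 0 * (M 1 1 * (M 2 2 * M 3 3 - M 2 3 * M 3 2) - M 1 2 * (M 2 1 * M 3 3 - M 2 3 * M 3 1)
        + M 1 3 * (M 2 1 * M 3 2 - M 2 2 * M 3 1))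
      - M 0 1 * (M 1 0 * (M 2 2 * M 3 3 - M 2 3 * M 3 2) - M 1 2 * (M 2 0 * M 3 3 - M 2 3 * M 3 0)
        + M 1 3 * (M 2 0 * M 3 2 - M 2 2 * M 3 0))
      + M 0 2 * (M 1 0 * (M 2 1 * M 3 3 - M 2 3 * M 3 1) - M 1 1 * (M 2 0 * M 3 3 - M 2 3 * M 3 0)
        + M 1 3 * (M 2 0 * M 3 1 - M 2 1 * M 3 0))
      - M 0 3 * (M 1 0 * (M 2 1 * M 3 2 - M 2 2 * M 3 1) - M 1 1 * (M 2 0 * M 3 2 - M 2 2 * M 3 0)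
        + M 1 2 * (M 2 0 * M 3 1 - M 2 1 * M 3 0)) := by
  rw [Matrix.det_succ_row_zero]
  simp [Fin.sum_univ_succ, Matrix.det_fin_three, Fin.succAbove]
  ring

/-- The 3×3 Hankel minor. -/
noncomputable def D3 (a : ℕ → ℝ) (n : ℕ) : ℝ :=
  a n * (a (n+2) * a (n+4) - a (n+3) * a (n+3))
    - a (n+1) * (a (n+1) * a (n+4) - a (n+3) * a (n+2))
    + a (n+2) * (a (n+1) * a (n+3) - a (n+2) * a (n+2))

lemma strictMono_val_add (n : ℕ) {m : ℕ} : StrictMono (fun i : Fin m => n + (i : ℕ)) :=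
  fun i j h => by simpa using (Fin.val_strictMono h)

lemma idx_rw (a : ℕ → ℝ) (n : ℕ) : ∀ i j : ℕ, a (i + (n + j)) = a (n + (i + j)) := by
  intro i j; congr 1; omega

lemma minor2 (a : ℕ → ℝ) (hTP4 : IsTPr 4 (fun i j => a (i + j))) (n : ℕ) :
    0 ≤ a n * a (n + 2) - a (n + 1) ^ 2 := by
  have h := hTP4 2 (by norm_num) (fun i : Fin 2 => (i : ℕ)) (fun j : Fin 2 => n + (j : ℕ))
    (fun i j h => Fin.val_strictMono h) (strictMono_val_add n)
  rw [Matrix.det_fin_two] at h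
  simp only [Matrix.of_apply, Fin.val_zero, Fin.val_one, idx_rw a n] at h
  norm_num at h
  nlinarith [h]

lemma minor3 (a : ℕ → ℝ) (hTP4 : IsTPr 4 (fun i j => a (i + j))) (n : ℕ) :
    0 ≤ D3 a n := by
  have h := hTP4 3 (by norm_num) (fun i : Fin 3 => (i : ℕ)) (fun j : Fin 3 => n + (j : ℕ))
    (fun i j h => Fin.val_strictMono h) (strictMono_val_add n)
  rw [Matrix.det_fin_three] at h
  simp only [Matrix.of_apply, Fin.val_zero, Fin.val_one, Fin.val_two, idx_rw a n] at h
  norm_num at h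
  unfold D3
  nlinarith [h]

lemma minor4 (a : ℕ → ℝ) (hTP4 : IsTPr 4 (fun i j => a (i + j))) (n : ℕ) :
    0 ≤ Matrix.det (Matrix.of fun i j : Fin 4 => a ((i : ℕ) + (n + (j : ℕ)))) :=
  hTP4 4 le_rfl (fun i : Fin 4 => (i : ℕ)) (fun j : Fin 4 => n + (j : ℕ))
    (fun i j h => Fin.val_strictMono h) (strictMono_val_add n)

/-- if `(aₙ)` is nonnegative and its Hankel matrix is `TP₄`, then `(aₙ)`
is `3`-log-convex: `L²(a)` is itself log-convex. -/
theorem three_log_convex_of_hankel_TP4 (a : ℕ → ℝ) (ha : ∀ n, 0 ≤ a n)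
    (hTP4 : IsTPr 4 (fun i j => a (i + j))) :
    ∀ n : ℕ, (Lop (Lop a) (n + 1)) ^ 2 ≤ Lop (Lop a) n * Lop (Lop a) (n + 2) := by
  intro n
  have hb : ∀ m, 0 ≤ a m * a (m + 2) - a (m + 1) ^ 2 := minor2 a hTP4
  -- Dodgson condensation: L²(a)ₘ = a (m+2) * D3 a m
  have hc : ∀ m, Lop (Lop a) m = a (m + 2) * D3 a m := by
    intro m
    unfold Lop D3
    rw [show m + 1 + 2 = m + 3 from by omega, show m + 2 + 2 = m + 4 from by omega,
      show m + 1 + 1 = m + 2 from by omega, show m + 2 + 1 = m + 3 from by omega]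
    ring
  -- Desnanot–Jacobi identity for the 4×4 minor
  have hdet4 := minor4 a hTP4 n
  have hDJ : Matrix.det (Matrix.of fun i j : Fin 4 => a ((i : ℕ) + (n + (j : ℕ))))
      * (a (n+2) * a (n+4) - a (n+3) ^ 2)
      = D3 a n * D3 a (n + 2) - (D3 a (n + 1)) ^ 2 := by
    rw [det_fin_four']
    simp only [Matrix.of_apply, show ((0 : Fin 4) : ℕ) = 0 from rfl,
      show ((1 : Fin 4) : ℕ) = 1 from rfl, show ((2 : Fin 4) : ℕ) = 2 from rfl,
      show ((3 : Fin 4) : ℕ) = 3 from rfl, idx_rw a n]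
    norm_num
    unfold D3
    rw [show n+1+1 = n+2 from by omega, show n+1+2 = n+3 from by omega,
      show n+1+3 = n+4 from by omega, show n+1+4 = n+5 from by omega,
      show n+2+1 = n+3 from by omega, show n+2+2 = n+4 from by omega,
      show n+2+3 = n+5 from by omega, show n+2+4 = n+6 from by omega]
    ring
  have hDlog : (D3 a (n + 1)) ^ 2 ≤ D3 a n * D3 a (n + 2) := by
    nlinarith [mul_nonneg hdet4 (hb (n + 2))]
  rw [hc n, hc (n+1), hc (n+2), show n + 1 + 2 = n + 3 from by omega,
    show n + 2 + 2 = n + 4 from by omega]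
  have h1 : a (n+3) ^ 2 ≤ a (n+2) * a (n+4) := by nlinarith [hb (n+2)]
  calc (a (n+3) * D3 a (n+1)) ^ 2 = a (n+3) ^ 2 * (D3 a (n+1)) ^ 2 := by ring
    _ ≤ (a (n+2) * a (n+4)) * (D3 a n * D3 a (n+2)) :=
        mul_le_mul h1 hDlog (sq_nonneg _) (mul_nonneg (ha _) (ha _))
    _ = a (n+2) * D3 a n * (a (n+4) * D3 a (n+2)) := by ring
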